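/- If λ is an eigenvalue of H_{κ,τ} = i·K_{κ,τ}, where K_{κ,τ} has rows (iκ, -i, τ), (0, -2iκ, 1), (1, 0, iκ), then the vector v_λ = (λ² - κλ - 2κ², -1, -2iκ + iλ) satisfies H_{κ,τ}·v_λ = λ·v_λ. -/
import Mathlib


open Matrix

noncomputable def Kmat (κ τ : ℝ) : Matrix (Fin 3) (Fin 3) ℂ :=
  !![Complex.I * κ, -Complex.I, (τ : ℂ);
     0, -(2 * Complex.I * κ), 1;
     1, 0, Complex.I * κ]

noncomputable def Hmat (κ τ : ℝ) : Matrix (Fin 3) (Fin 3) ℂ := Complex.I • Kmat κ τ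

theorem stmt_10 (κ τ : ℝ) (lam : ℂ)
    (hlam : ∃ v : Fin 3 → ℂ, v ≠ 0 ∧ (Hmat κ τ).mulVec v = lam • v) :
    (Hmat κ τ).mulVec
        ![lam ^ 2 - κ * lam - 2 * (κ : ℂ) ^ 2, -1, -(2 * Complex.I * κ) + Complex.I * lam] =
      lam • ![lam ^ 2 - κ * lam - 2 * (κ : ℂ) ^ 2, -1, -(2 * Complex.I * κ) + Complex.I * lam] := by
  obtain ⟨v, hv, hmv⟩ := hlam
  have hdet : (Hmat κ τ - lam • (1 : Matrix (Fin 3) (Fin 3) ℂ)).det = 0 := by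
    rw [← Matrix.exists_mulVec_eq_zero_iff]
    exact ⟨v, hv, by
      simp [Matrix.sub_mulVec, Matrix.smul_mulVec, hmv, sub_eq_zero]⟩
  simp [Hmat, Kmat, Matrix.det_fin_three, Matrix.one_apply] at hdet
  have hI : Complex.I ^ 2 = -1 := Complex.I_sq
  set I := Complex.I with hIdef
  set u : ℂ := I ^ 2 with hu
  funext i
  fin_cases i <;>
    simp [Hmat, Kmat, Matrix.mulVec, dotProduct, Fin.sum_univ_three, ← hIdef]
  · linear_combination hdet +
      ((κ : ℂ) * lam ^ 2 + u - 2 * u * τ * κ - (κ : ℂ) ^ 2 * lam * (3 * u - 2)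
        + 2 * u * (κ : ℂ) ^ 3 * (u - 1) + 1 - u) * hI
  · linear_combination lam * hI
  · linear_combination I * (κ : ℂ) * (lam - 2 * κ) * hI
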